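/- For i = 1, 2, let Gᵢ be an rᵢ-regular graph on nᵢ vertices with adjacency spectrum {r₁ = λ₁, λ₂, …, λ_{n₁}} for G₁ and {r₂ = μ₁, μ₂, …, μ_{n₂}} for G₂. Then the distance signless Laplacian spectrum of the join G₁∇G₂ consists of the eigenvalues 2n₁ + n₂ − r₁ − λⱼ − 4 for j = 2, 3, …, n₁, the eigenvalues 2n₂ + n₁ − r₂ − μⱼ − 4 for j = 2, 3, …, n₂, and the two eigenvalues (5/2)(n₁ + n₂) − r₁ − r₂ − 4 ± √Δ/2, where Δ = 9n₁² − 14n₁n₂ − 12n₁r₁ + 12n₁r₂ + 9n₂² + 12n₂r₁ − 12n₂r₂ + 4r₁² − 8r₁r₂ + 4r₂². -/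

import Mathlib

open Finset

/-- The distance matrix of a simple graph, with real entries. -/
noncomputable def distMatrix {V : Type*} [Fintype V] (G : SimpleGraph V) : Matrix V V ℝ :=
  Matrix.of fun u v => (G.dist u v : ℝ)

/-- The transmission of a vertex: the sum of distances to all other vertices. -/
noncomputable def transmission {V : Type*} [Fintype V] (G : SimpleGraph V) (u : V) : ℝ :=
  ∑ v, (G.dist u v : ℝ)

/-- The second transmission degree of a vertex: `T_i = ∑_j d(v_i, v_j) Tr_j`. -/
noncomputable def secondTransmission {V : Type*} [Fintype V] (G : SimpleGraph V) (u : V) : ℝ :=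
  ∑ v, (G.dist u v : ℝ) * transmission G v

/-- The distance Laplacian matrix `L(G) = Tr(G) - D(G)`. -/
noncomputable def distLaplacian {V : Type*} [Fintype V] [DecidableEq V] (G : SimpleGraph V) :
    Matrix V V ℝ :=
  Matrix.diagonal (transmission G) - distMatrix G

/-- The distance signless Laplacian matrix `Q(G) = Tr(G) + D(G)`. -/
noncomputable def distSignlessLaplacian {V : Type*} [Fintype V] [DecidableEq V]
    (G : SimpleGraph V) : Matrix V V ℝ :=
  Matrix.diagonal (transmission G) + distMatrix G

/-- The generalized distance matrix `D_α(G) = α Tr(G) + (1 - α) D(G)`. -/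
noncomputable def genDistMatrix {V : Type*} [Fintype V] [DecidableEq V] (a : ℝ)
    (G : SimpleGraph V) : Matrix V V ℝ :=
  a • Matrix.diagonal (transmission G) + (1 - a) • distMatrix G

/-- The join `G₁ ∇ G₂`: disjoint union of `G₁` and `G₂` together with all edges
between the two parts. -/
def joinGraph {V₁ V₂ : Type*} (G₁ : SimpleGraph V₁) (G₂ : SimpleGraph V₂) :
    SimpleGraph (V₁ ⊕ V₂) where
  Adj x y :=
    match x, y with
    | Sum.inl u, Sum.inl v => G₁.Adj u v
    | Sum.inr u, Sum.inr v => G₂.Adj u v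
    | Sum.inl _, Sum.inr _ => True
    | Sum.inr _, Sum.inl _ => True
  symm := by
    constructor
    rintro (u | u) (v | v) h
    · exact SimpleGraph.Adj.symm (G := G₁) h
    · exact h
    · exact h
    · exact SimpleGraph.Adj.symm (G := G₂) h
  loopless := by
    constructor
    rintro (u | u) h
    · exact SimpleGraph.Adj.ne (G := G₁) h rfl
    · exact SimpleGraph.Adj.ne (G := G₂) h rfl


/-!
Every vertex of `G₁ ∇ G₂` is at distance `1` from the other side and at distance `2` from its
non-neighbours on its own side. With `J` the all-ones matrices and `Aᵢ` the adjacency matrices this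
makes `Q(G₁ ∇ G₂)` the block matrix `[[β₁ I + 2J - A₁, J], [J, β₂ I + 2J - A₂]]`, where
`β₁ = 2n₁ + n₂ - r₁ - 4` and symmetrically for `β₂`. By regularity the diagonal blocks of `xI - Q`
are `Nᵢ - 2J` with `Nᵢ = (x - βᵢ) I + Aᵢ` having the all-ones vector as an eigenvector, for the
eigenvalue `x - δᵢ`, `δᵢ = βᵢ - rᵢ`. A Schur complement and the matrix determinant lemma then give
`det (xI - Q) (x - δ₁) (x - δ₂) = det N₁ det N₂ ((x - δ₁ - 2n₁) (x - δ₂ - 2n₂) - n₁ n₂)`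
for all but finitely many real `x`, hence as polynomials. Finally `det Nᵢ = ∏ (x - βᵢ + λ)` over the
adjacency spectrum of `Gᵢ`, and the factor `λ = rᵢ` cancels against `x - δᵢ`.
-/

open Matrix Polynomial

lemma Polynomial.eq_of_eval_eq_of_eval_ne_zero {R : Type*} [CommRing R] [IsDomain R] [Infinite R]
    {p q r : R[X]} (hr : r ≠ 0) (h : ∀ x, r.eval x ≠ 0 → p.eval x = q.eval x) : p = q :=
  eq_of_infinite_eval_eq p q ((finite_setOfPred_isRoot hr).infinite_compl.mono h)

lemma Polynomial.X_sub_C_mul_X_sub_C_sub_C {R : Type*} [CommRing R] {a b c p q : R}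
    (hsum : p + q = a + b) (hprod : p * q = a * b - c) :
    (X - C a) * (X - C b) - C c = (X - C p) * (X - C q) := by
  have hsum' := congrArg C hsum
  have hprod' := congrArg C hprod
  simp only [C_add, C_mul, C_sub] at hsum' hprod'
  linear_combination X * hsum' - hprod'

namespace Matrix

lemma charpoly_eq_prod_X_sub_C_of_roots {R n : Type*} [CommRing R] [IsDomain R] [Fintype n]
    [DecidableEq n] {A : Matrix n n R} {lam : n → R}
    (h : A.charpoly.roots = Finset.univ.val.map lam) :
    A.charpoly = ∏ v, (X - C (lam v)) := by
  have := prod_multiset_X_sub_C_of_monic_of_roots_card_eq A.charpoly_monic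
    (by rw [h, Multiset.card_map, charpoly_natDegree_eq_dim]; rfl)
  rw [h, Multiset.map_map] at this
  exact this.symm

lemma det_smul_one_add_eq_prod {R n : Type*} [CommRing R] [IsDomain R] [Fintype n]
    [DecidableEq n] {A : Matrix n n R} {lam : n → R}
    (h : A.charpoly.roots = Finset.univ.val.map lam) (y : R) :
    (y • 1 + A).det = ∏ v, (y + lam v) := by
  have heval := A.eval_charpoly (-y)
  have hneg : scalar n (-y) - A = -(y • 1 + A) := by
    rw [scalar_apply, ← smul_one_eq_diagonal, neg_smul]; abel
  have hsign : ∏ v, (-y - lam v) = (-1) ^ Fintype.card n * ∏ v, (y + lam v) := by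
    rw [← Finset.card_univ, ← Finset.prod_const, ← Finset.prod_mul_distrib]
    exact Finset.prod_congr rfl fun _ _ => by ring
  simp only [charpoly_eq_prod_X_sub_C_of_roots h, eval_prod, eval_sub, eval_X, eval_C] at heval
  rw [hneg, det_neg, hsign] at heval
  exact mul_left_cancel₀ (pow_ne_zero _ (neg_ne_zero.mpr one_ne_zero)) heval.symm

variable {K : Type*} [Field K] {m n : Type*}

lemma smul_inv_mulVec_one [Fintype m] [DecidableEq m] {N : Matrix m m K} (hN : IsUnit N.det)
    {s : K} (hs : N *ᵥ 1 = s • 1) : s • (N⁻¹ *ᵥ 1) = 1 := by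
  rw [← mulVec_smul, ← hs, mulVec_mulVec, nonsing_inv_mul N hN, one_mulVec]

lemma add_smul_vecMulVec_one_mulVec_one [Fintype m] {N : Matrix m m K} {s : K}
    (hs : N *ᵥ 1 = s • 1) (c : K) :
    (N + c • vecMulVec 1 1) *ᵥ 1 = (s + c * Fintype.card m) • 1 := by
  rw [add_mulVec, hs, smul_mulVec, vecMulVec_mulVec, one_dotProduct_one]
  ext; simp

lemma det_add_smul_vecMulVec_one_mul [Fintype m] [DecidableEq m] {N : Matrix m m K}
    (hN : IsUnit N.det) {s : K} (hs : N *ᵥ 1 = s • 1) (c : K) :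
    (N + c • vecMulVec 1 1).det * s = N.det * (s + c * Fintype.card m) := by
  rw [← smul_vecMulVec, vecMulVec_eq Unit, det_add_replicateCol_mul_replicateRow hN,
    det_unique (1 + _), mul_assoc, Matrix.mul_assoc, ← replicateCol_mulVec, add_apply,
    one_apply_eq, replicateRow_mul_replicateCol_apply]
  congr 1
  calc (1 + 1 ⬝ᵥ N⁻¹ *ᵥ c • 1) * s = s + c * (1 ⬝ᵥ s • (N⁻¹ *ᵥ 1)) := by
        simp only [mulVec_smul, dotProduct_smul, smul_eq_mul]; ring
    _ = s + c * Fintype.card m := by simp [smul_inv_mulVec_one hN hs, dotProduct_one]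

lemma vecMulVec_one_mul_inv_mul_vecMulVec_one [Fintype n] [DecidableEq n] {D : Matrix n n K}
    (hD : IsUnit D.det) {t : K} (ht : D *ᵥ 1 = t • 1) :
    t • ((vecMulVec 1 1 : Matrix m n K) * D⁻¹ * (vecMulVec 1 1 : Matrix n m K)) =
      (Fintype.card n : K) • (vecMulVec 1 1 : Matrix m m K) := by
  rw [Matrix.mul_assoc, mul_vecMulVec, ← Matrix.mul_smul, ← smul_vecMulVec,
    smul_inv_mulVec_one hD ht, vecMulVec_mul_vecMulVec, one_dotProduct_one, vecMulVec_smul]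

lemma det_fromBlocks_add_smul_vecMulVec_one_mul [Fintype m] [DecidableEq m] [Fintype n]
    [DecidableEq n] {N₁ : Matrix m m K} {N₂ : Matrix n n K} (h₁ : IsUnit N₁.det)
    (h₂ : IsUnit N₂.det) {s₁ s₂ : K} (hs₁ : N₁ *ᵥ 1 = s₁ • 1) (hs₂ : N₂ *ᵥ 1 = s₂ • 1)
    (a b c d : K) (ht : s₂ + d * Fintype.card n ≠ 0) :
    (fromBlocks (N₁ + a • vecMulVec 1 1) (b • vecMulVec 1 1) (c • vecMulVec 1 1)
        (N₂ + d • vecMulVec 1 1)).det * (s₁ * s₂) =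
      N₁.det * N₂.det * ((s₁ + a * Fintype.card m) * (s₂ + d * Fintype.card n)
        - b * c * Fintype.card m * Fintype.card n) := by
  set t := s₂ + d * Fintype.card n
  set D := N₂ + d • vecMulVec 1 1
  have hDdet : D.det * s₂ = N₂.det * t := det_add_smul_vecMulVec_one_mul h₂ hs₂ d
  have hD : IsUnit D.det :=
    isUnit_iff_ne_zero.mpr (left_ne_zero_of_mul (hDdet ▸ mul_ne_zero h₂.ne_zero ht))
  have hJDJ : (vecMulVec 1 1 : Matrix m n K) * D⁻¹ * (vecMulVec 1 1 : Matrix n m K) =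
      (Fintype.card n / t : K) • vecMulVec 1 1 := by
    rw [div_eq_inv_mul, mul_smul, ← vecMulVec_one_mul_inv_mul_vecMulVec_one hD
      (add_smul_vecMulVec_one_mulVec_one hs₂ d), smul_smul, inv_mul_cancel₀ ht, one_smul]
  have hSchur : N₁ + a • vecMulVec 1 1 -
        (b • vecMulVec 1 1 : Matrix m n K) * D⁻¹ * (c • vecMulVec 1 1 : Matrix n m K) =
      N₁ + (a - b * c * (Fintype.card n / t)) • vecMulVec 1 1 := by
    rw [Matrix.smul_mul, Matrix.mul_smul, Matrix.smul_mul, hJDJ, smul_smul, smul_smul, sub_smul,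
      add_sub_assoc, mul_comm c b]
  have := invertibleOfIsUnitDet D hD
  rw [det_fromBlocks₂₂, invOf_eq_nonsing_inv, hSchur]
  calc D.det * (N₁ + _).det * (s₁ * s₂) = (D.det * s₂) * ((N₁ + _).det * s₁) := by ring
    _ = _ := by
      rw [hDdet, det_add_smul_vecMulVec_one_mul h₁ hs₁]
      field_simp
      ring

end Matrix

namespace SimpleGraph

lemma dist_eq_two_of_adj_of_adj {V : Type*} {G : SimpleGraph V} {u v w : V} (hne : u ≠ v)
    (hnadj : ¬G.Adj u v) (huw : G.Adj u w) (hwv : G.Adj w v) : G.dist u v = 2 := by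
  have h : G.edist u v = 2 :=
    edist_eq_two_iff.mpr ⟨hne, hnadj, w, G.mem_commonNeighbors.mpr ⟨huw, hwv.symm⟩⟩
  exact_mod_cast (huw.reachable.trans hwv.reachable).coe_dist_eq_edist.trans h

lemma IsRegularOfDegree.adjMatrix_mulVec_one {V R : Type*} [Fintype V] [NonAssocSemiring R]
    {G : SimpleGraph V} [DecidableRel G.Adj] {r : ℕ} (hreg : G.IsRegularOfDegree r) :
    G.adjMatrix R *ᵥ 1 = (r : R) • 1 := by
  ext v
  simpa using G.adjMatrix_mulVec_const_apply_of_regular (a := (1 : R)) hreg (v := v)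

end SimpleGraph

lemma transmission_eq_distMatrix_mulVec_one {V : Type*} [Fintype V] (G : SimpleGraph V) :
    transmission G = distMatrix G *ᵥ 1 := by
  ext u
  simp [transmission, distMatrix, mulVec, dotProduct]

section Join

variable {V₁ V₂ : Type*} (G₁ : SimpleGraph V₁) (G₂ : SimpleGraph V₂)

lemma joinGraph_dist_inl_inr (u : V₁) (v : V₂) : (joinGraph G₁ G₂).dist (.inl u) (.inr v) = 1 :=
  SimpleGraph.dist_eq_one_iff_adj.mpr trivial

lemma joinGraph_dist_inr_inl (u : V₂) (v : V₁) : (joinGraph G₁ G₂).dist (.inr u) (.inl v) = 1 :=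
  SimpleGraph.dist_eq_one_iff_adj.mpr trivial

lemma joinGraph_dist_inl_inl [DecidableEq V₁] [DecidableRel G₁.Adj] [Nonempty V₂] (u v : V₁) :
    (joinGraph G₁ G₂).dist (.inl u) (.inl v) =
      if u = v then 0 else if G₁.Adj u v then 1 else 2 := by
  split_ifs with huv hadj
  · rw [huv, SimpleGraph.dist_self]
  · exact SimpleGraph.dist_eq_one_iff_adj.mpr hadj
  · exact SimpleGraph.dist_eq_two_of_adj_of_adj (by simpa) hadj
      (w := .inr (Classical.arbitrary V₂)) trivial trivial

lemma joinGraph_dist_inr_inr [DecidableEq V₂] [DecidableRel G₂.Adj] [Nonempty V₁] (u v : V₂) :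
    (joinGraph G₁ G₂).dist (.inr u) (.inr v) =
      if u = v then 0 else if G₂.Adj u v then 1 else 2 := by
  split_ifs with huv hadj
  · rw [huv, SimpleGraph.dist_self]
  · exact SimpleGraph.dist_eq_one_iff_adj.mpr hadj
  · exact SimpleGraph.dist_eq_two_of_adj_of_adj (by simpa) hadj
      (w := .inl (Classical.arbitrary V₁)) trivial trivial

variable [Fintype V₁] [Fintype V₂] [DecidableEq V₁] [DecidableEq V₂]
  [DecidableRel G₁.Adj] [DecidableRel G₂.Adj] [Nonempty V₁] [Nonempty V₂]

lemma distMatrix_joinGraph :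
    distMatrix (joinGraph G₁ G₂) =
      fromBlocks ((2 : ℝ) • (vecMulVec 1 1 - 1) - G₁.adjMatrix ℝ) (vecMulVec 1 1)
        (vecMulVec 1 1) ((2 : ℝ) • (vecMulVec 1 1 - 1) - G₂.adjMatrix ℝ) := by
  ext (u | u) (v | v) <;>
    simp [distMatrix, joinGraph_dist_inl_inl, joinGraph_dist_inl_inr, joinGraph_dist_inr_inl,
      joinGraph_dist_inr_inr, one_apply] <;>
    split_ifs <;> simp_all <;> norm_num

variable {G₁ G₂} {r₁ r₂ : ℕ}

local notation "n₁" => (Fintype.card V₁ : ℝ)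
local notation "n₂" => (Fintype.card V₂ : ℝ)

lemma transmission_joinGraph
    (hreg₁ : G₁.IsRegularOfDegree r₁) (hreg₂ : G₂.IsRegularOfDegree r₂) :
    transmission (joinGraph G₁ G₂) =
      Sum.elim (fun _ => 2 * n₁ + n₂ - r₁ - 2) (fun _ => 2 * n₂ + n₁ - r₂ - 2) := by
  rw [transmission_eq_distMatrix_mulVec_one, distMatrix_joinGraph, fromBlocks_mulVec]
  ext (u | u) <;>
    simp only [Sum.elim_inl, Sum.elim_inr, Pi.one_comp, Pi.add_apply, sub_mulVec, smul_mulVec,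
      vecMulVec_mulVec, one_dotProduct_one, one_mulVec, hreg₁.adjMatrix_mulVec_one,
      hreg₂.adjMatrix_mulVec_one] <;> simp <;> ring

lemma distSignlessLaplacian_joinGraph
    (hreg₁ : G₁.IsRegularOfDegree r₁) (hreg₂ : G₂.IsRegularOfDegree r₂) :
    distSignlessLaplacian (joinGraph G₁ G₂) =
      fromBlocks ((2 * n₁ + n₂ - r₁ - 4) • 1 + (2 : ℝ) • vecMulVec 1 1 - G₁.adjMatrix ℝ)
        (vecMulVec 1 1) (vecMulVec 1 1)
        ((2 * n₂ + n₁ - r₂ - 4) • 1 + (2 : ℝ) • vecMulVec 1 1 - G₂.adjMatrix ℝ) := by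
  rw [distSignlessLaplacian, transmission_joinGraph hreg₁ hreg₂, distMatrix_joinGraph,
    ← fromBlocks_diagonal, fromBlocks_add, ← smul_one_eq_diagonal, ← smul_one_eq_diagonal]
  congr 1 <;> module

variable {lam : V₁ → ℝ} {mu : V₂ → ℝ}

lemma eval_charpoly_distSignlessLaplacian_joinGraph_mul
    (hreg₁ : G₁.IsRegularOfDegree r₁) (hreg₂ : G₂.IsRegularOfDegree r₂)
    (hlam : (G₁.adjMatrix ℝ).charpoly.roots = Finset.univ.val.map lam)
    (hmu : (G₂.adjMatrix ℝ).charpoly.roots = Finset.univ.val.map mu) {x : ℝ}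
    (hx₁ : ∏ v, (x - (2 * n₁ + n₂ - r₁ - lam v - 4)) ≠ 0)
    (hx₂ : ∏ v, (x - (2 * n₂ + n₁ - r₂ - mu v - 4)) ≠ 0)
    (hx : x - (4 * n₂ + n₁ - 2 * r₂ - 4) ≠ 0) :
    (distSignlessLaplacian (joinGraph G₁ G₂)).charpoly.eval x *
        ((x - (2 * n₁ + n₂ - 2 * r₁ - 4)) * (x - (2 * n₂ + n₁ - 2 * r₂ - 4))) =
      (∏ v, (x - (2 * n₁ + n₂ - r₁ - lam v - 4))) * (∏ v, (x - (2 * n₂ + n₁ - r₂ - mu v - 4))) *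
        ((x - (4 * n₁ + n₂ - 2 * r₁ - 4)) * (x - (4 * n₂ + n₁ - 2 * r₂ - 4)) - n₁ * n₂) := by
  set N₁ := (x - (2 * n₁ + n₂ - r₁ - 4)) • 1 + G₁.adjMatrix ℝ
  set N₂ := (x - (2 * n₂ + n₁ - r₂ - 4)) • 1 + G₂.adjMatrix ℝ
  have hdet₁ : N₁.det = ∏ v, (x - (2 * n₁ + n₂ - r₁ - lam v - 4)) := by
    rw [det_smul_one_add_eq_prod hlam]
    exact Finset.prod_congr rfl fun _ _ => by ring
  have hdet₂ : N₂.det = ∏ v, (x - (2 * n₂ + n₁ - r₂ - mu v - 4)) := by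
    rw [det_smul_one_add_eq_prod hmu]
    exact Finset.prod_congr rfl fun _ _ => by ring
  have hN₁ : N₁ *ᵥ 1 = (x - (2 * n₁ + n₂ - 2 * r₁ - 4)) • 1 := by
    rw [add_mulVec, smul_mulVec, one_mulVec, hreg₁.adjMatrix_mulVec_one, ← add_smul]; ring_nf
  have hN₂ : N₂ *ᵥ 1 = (x - (2 * n₂ + n₁ - 2 * r₂ - 4)) • 1 := by
    rw [add_mulVec, smul_mulVec, one_mulVec, hreg₂.adjMatrix_mulVec_one, ← add_smul]; ring_nf
  have hblocks : scalar (V₁ ⊕ V₂) x - distSignlessLaplacian (joinGraph G₁ G₂) =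
      fromBlocks (N₁ + (-2 : ℝ) • vecMulVec 1 1) ((-1 : ℝ) • vecMulVec 1 1)
        ((-1 : ℝ) • vecMulVec 1 1) (N₂ + (-2 : ℝ) • vecMulVec 1 1) := by
    rw [distSignlessLaplacian_joinGraph hreg₁ hreg₂, scalar_apply, ← smul_one_eq_diagonal,
      ← fromBlocks_one, fromBlocks_smul, sub_eq_add_neg, fromBlocks_neg, fromBlocks_add]
    congr 1 <;> module
  rw [eval_charpoly, hblocks, det_fromBlocks_add_smul_vecMulVec_one_mul (hdet₁ ▸ hx₁.isUnit)
    (hdet₂ ▸ hx₂.isUnit) hN₁ hN₂ _ _ _ _ (fun h => hx (by linear_combination h)), hdet₁, hdet₂]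
  ring

lemma charpoly_distSignlessLaplacian_joinGraph_mul
    (hreg₁ : G₁.IsRegularOfDegree r₁) (hreg₂ : G₂.IsRegularOfDegree r₂)
    (hlam : (G₁.adjMatrix ℝ).charpoly.roots = Finset.univ.val.map lam)
    (hmu : (G₂.adjMatrix ℝ).charpoly.roots = Finset.univ.val.map mu) :
    (distSignlessLaplacian (joinGraph G₁ G₂)).charpoly *
        ((X - C (2 * n₁ + n₂ - 2 * r₁ - 4)) * (X - C (2 * n₂ + n₁ - 2 * r₂ - 4))) =
      (∏ v, (X - C (2 * n₁ + n₂ - r₁ - lam v - 4))) * (∏ v, (X - C (2 * n₂ + n₁ - r₂ - mu v - 4))) *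
        ((X - C (4 * n₁ + n₂ - 2 * r₁ - 4)) * (X - C (4 * n₂ + n₁ - 2 * r₂ - 4)) -
          C (n₁ * n₂)) := by
  refine eq_of_eval_eq_of_eval_ne_zero
    (r := (∏ v, (X - C (2 * n₁ + n₂ - r₁ - lam v - 4))) *
      (∏ v, (X - C (2 * n₂ + n₁ - r₂ - mu v - 4))) * (X - C (4 * n₂ + n₁ - 2 * r₂ - 4)))
    (((monic_prod_of_monic _ _ fun _ _ => monic_X_sub_C _).mul
      (monic_prod_of_monic _ _ fun _ _ => monic_X_sub_C _)).mul (monic_X_sub_C _)).ne_zero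
    fun x hx => ?_
  simp only [eval_mul, eval_prod, eval_sub, eval_X, eval_C, mul_ne_zero_iff] at hx ⊢
  exact eval_charpoly_distSignlessLaplacian_joinGraph_mul hreg₁ hreg₂ hlam hmu hx.1.1 hx.1.2 hx.2

lemma charpoly_distSignlessLaplacian_joinGraph
    (hreg₁ : G₁.IsRegularOfDegree r₁) (hreg₂ : G₂.IsRegularOfDegree r₂)
    (hlam : (G₁.adjMatrix ℝ).charpoly.roots = Finset.univ.val.map lam)
    (hmu : (G₂.adjMatrix ℝ).charpoly.roots = Finset.univ.val.map mu) {w₁ : V₁}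
    (hw₁ : lam w₁ = r₁) {w₂ : V₂} (hw₂ : mu w₂ = r₂) :
    (distSignlessLaplacian (joinGraph G₁ G₂)).charpoly =
      (∏ v ∈ Finset.univ.erase w₁, (X - C (2 * n₁ + n₂ - r₁ - lam v - 4))) *
        (∏ v ∈ Finset.univ.erase w₂, (X - C (2 * n₂ + n₁ - r₂ - mu v - 4))) *
        ((X - C (4 * n₁ + n₂ - 2 * r₁ - 4)) * (X - C (4 * n₂ + n₁ - 2 * r₂ - 4)) -
          C (n₁ * n₂)) := by
  have key := charpoly_distSignlessLaplacian_joinGraph_mul hreg₁ hreg₂ hlam hmu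
  rw [← Finset.mul_prod_erase _ _ (Finset.mem_univ w₁),
    ← Finset.mul_prod_erase _ _ (Finset.mem_univ w₂), hw₁, hw₂] at key
  refine mul_right_cancel₀ (mul_ne_zero (X_sub_C_ne_zero (2 * n₁ + n₂ - 2 * r₁ - 4))
    (X_sub_C_ne_zero (2 * n₂ + n₁ - 2 * r₂ - 4))) ?_
  rw [key]
  ring_nf

end Join

theorem stmt6 {V₁ V₂ : Type*} [Fintype V₁] [DecidableEq V₁] [Fintype V₂] [DecidableEq V₂]
    (G₁ : SimpleGraph V₁) (G₂ : SimpleGraph V₂)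
    [DecidableRel G₁.Adj] [DecidableRel G₂.Adj]
    (n₁ n₂ : ℕ) (hn₁ : Fintype.card V₁ = n₁) (hn₂ : Fintype.card V₂ = n₂)
    (r₁ r₂ : ℕ) (hreg₁ : G₁.IsRegularOfDegree r₁) (hreg₂ : G₂.IsRegularOfDegree r₂)
    (lam : V₁ → ℝ) (mu : V₂ → ℝ)
    (hlam : (G₁.adjMatrix ℝ).charpoly.roots = Finset.univ.val.map lam)
    (hmu : (G₂.adjMatrix ℝ).charpoly.roots = Finset.univ.val.map mu)
    (w₁ : V₁) (hw₁ : lam w₁ = r₁) (w₂ : V₂) (hw₂ : mu w₂ = r₂)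
    (Δ : ℝ)
    (hΔ : Δ = 9 * (n₁ : ℝ) ^ 2 - 14 * (n₁ : ℝ) * (n₂ : ℝ) - 12 * (n₁ : ℝ) * (r₁ : ℝ)
        + 12 * (n₁ : ℝ) * (r₂ : ℝ) + 9 * (n₂ : ℝ) ^ 2 + 12 * (n₂ : ℝ) * (r₁ : ℝ)
        - 12 * (n₂ : ℝ) * (r₂ : ℝ) + 4 * (r₁ : ℝ) ^ 2 - 8 * (r₁ : ℝ) * (r₂ : ℝ)
        + 4 * (r₂ : ℝ) ^ 2) :
    (distSignlessLaplacian (joinGraph G₁ G₂)).charpoly.roots =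
      ((Finset.univ.erase w₁).val.map fun v =>
          2 * (n₁ : ℝ) + (n₂ : ℝ) - (r₁ : ℝ) - lam v - 4)
      + ((Finset.univ.erase w₂).val.map fun v =>
          2 * (n₂ : ℝ) + (n₁ : ℝ) - (r₂ : ℝ) - mu v - 4)
      + ({5 / 2 * ((n₁ : ℝ) + (n₂ : ℝ)) - (r₁ : ℝ) - (r₂ : ℝ) - 4 + Real.sqrt Δ / 2,
          5 / 2 * ((n₁ : ℝ) + (n₂ : ℝ)) - (r₁ : ℝ) - (r₂ : ℝ) - 4 - Real.sqrt Δ / 2} :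
            Multiset ℝ) := by
  subst hn₁ hn₂
  have : Nonempty V₁ := ⟨w₁⟩
  have : Nonempty V₂ := ⟨w₂⟩
  have hΔ_nonneg : 0 ≤ Δ := by
    have : Δ = (3 * (Fintype.card V₁ : ℝ) - 3 * Fintype.card V₂ - 2 * r₁ + 2 * r₂) ^ 2
        + 4 * Fintype.card V₁ * Fintype.card V₂ := by rw [hΔ]; ring
    rw [this]; positivity
  have hsqrt := Real.sq_sqrt hΔ_nonneg
  set ρp := 5 / 2 * ((Fintype.card V₁ : ℝ) + Fintype.card V₂) - r₁ - r₂ - 4 + √Δ / 2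
  set ρm := 5 / 2 * ((Fintype.card V₁ : ℝ) + Fintype.card V₂) - r₁ - r₂ - 4 - √Δ / 2
  rw [charpoly_distSignlessLaplacian_joinGraph hreg₁ hreg₂ hlam hmu hw₁ hw₂,
    X_sub_C_mul_X_sub_C_sub_C (p := ρp) (q := ρm) (by ring)
      (by linear_combination (-1 / 4 : ℝ) * hsqrt + (-1 / 4 : ℝ) * hΔ),
    ← roots_multiset_prod_X_sub_C (_ + _ + _)]
  congr 1
  simp only [Multiset.map_add, Multiset.prod_add, Multiset.map_map, Finset.prod_eq_multiset_prod,
    Function.comp_def, Multiset.insert_eq_cons, Multiset.map_cons, Multiset.prod_cons,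
    Multiset.map_singleton, Multiset.prod_singleton]
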